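/- For every nonzero integer m and every t ∈ ℝ, the Hilbert-type cotangent kernel acts diagonally on trigonometric monomials in the principal-value sense: lim_{ε→0⁺} ∫_{{s ∈ [−π,π] : ε ≤ |s|}} cot(s/2) e^{im(t+s)} ds = 2πi · sgn(m) · e^{imt}. Equivalently, with f_m(ζ) = e^{imζ}, one has (1/(2π)) · PV ∫₀^{2π} cot((ζ−t)/2) f_m′(ζ) dζ = −|m| e^{imt}. -/

import Mathlib

open MeasureTheory Filter

lemma odd_setIntegral_zero (f : ℝ → ℝ) (S : Set ℝ) (hSm : MeasurableSet S)
    (hS : ∀ x, x ∈ S ↔ -x ∈ S) (hf : ∀ x, f (-x) = - f x) :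
    ∫ x in S, f x = 0 := by
  have h1 : ∫ x in S, f x = ∫ x, S.indicator f x := (integral_indicator hSm).symm
  have h2 : ∫ x, S.indicator f x = ∫ x, S.indicator f (-x) :=
    (integral_neg_eq_self (S.indicator f) volume).symm
  have h3 : ∀ x, S.indicator f (-x) = - S.indicator f x := by
    intro x
    by_cases hx : x ∈ S
    · rw [Set.indicator_of_mem ((hS x).mp hx), Set.indicator_of_mem hx, hf]
    · have hx' : -x ∉ S := fun h => hx (by simpa using (hS (-x)).mp h)
      rw [Set.indicator_of_notMem hx', Set.indicator_of_notMem hx, neg_zero]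
  have h4 : ∫ x, S.indicator f (-x) = - ∫ x, S.indicator f x := by
    simp_rw [h3]; exact integral_neg _
  have h5 := h2.trans h4
  linarith [h1, h5]

lemma dirichlet_key (s : ℝ) (hs : Real.sin (s/2) ≠ 0) (n : ℕ) :
    Real.cot (s/2) * Real.sin ((n+1) * s) =
      1 + Real.cos ((n+1)*s) + 2 * ∑ k ∈ Finset.range n, Real.cos ((k+1:ℕ)*s) := by
  induction n with
  | zero =>
    simp only [Nat.cast_zero, zero_add, one_mul, Finset.range_zero, Finset.sum_empty, mul_zero,
      add_zero]
    have h2 : s = 2 * (s/2) := by ring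
    rw [Real.cot_eq_cos_div_sin]
    rw [h2, Real.sin_two_mul, Real.cos_two_mul]
    have hpy := Real.sin_sq_add_cos_sq (s/2)
    field_simp
    nlinarith [hpy]
  | succ n ih =>
    have hstep : Real.cot (s/2) * (Real.sin ((n+1+1) * s) - Real.sin ((n+1) * s)) =
        Real.cos ((n+1+1)*s) + Real.cos ((n+1)*s) := by
      have ha : ((n:ℝ)+1+1) * s = (n+1)*s + s := by ring
      rw [ha, Real.sin_add, Real.cos_add, Real.cot_eq_cos_div_sin]
      have h2 : s = 2 * (s/2) := by ring
      rw [h2, Real.sin_two_mul, Real.cos_two_mul]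
      have hpy := Real.sin_sq_add_cos_sq (s/2)
      field_simp
      rw [show s * ((n:ℝ)+1) = ((n:ℝ)+1) * s by ring]
      linear_combination 2 * Real.sin ((↑n + 1) * s) * Real.cos (s/2) * hpy
    have hcast : ((n+1:ℕ):ℝ) + 1 = (n:ℝ)+1+1 := by push_cast; ring
    rw [hcast, Finset.sum_range_succ]
    have := ih
    push_cast at this ⊢
    nlinarith [hstep, this]

noncomputable def Dn (n : ℕ) (s : ℝ) : ℝ :=
  1 + Real.cos ((n+1)*s) + 2 * ∑ k ∈ Finset.range n, Real.cos ((k+1:ℕ)*s)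

lemma Dn_continuous (n : ℕ) : Continuous (Dn n) := by
  unfold Dn
  fun_prop

lemma Dn_bound (n : ℕ) (s : ℝ) : |Dn n s| ≤ 2*(n+1) := by
  unfold Dn
  have h1 : |Real.cos ((n+1)*s)| ≤ 1 := Real.abs_cos_le_one _
  have h2 : |∑ k ∈ Finset.range n, Real.cos ((k+1:ℕ)*s)| ≤ n := by
    calc |∑ k ∈ Finset.range n, Real.cos ((k+1:ℕ)*s)|
        ≤ ∑ k ∈ Finset.range n, |Real.cos ((k+1:ℕ)*s)| := Finset.abs_sum_le_sum_abs _ _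
      _ ≤ ∑ k ∈ Finset.range n, 1 := Finset.sum_le_sum fun k _ => Real.abs_cos_le_one _
      _ = n := by simp
  calc |1 + Real.cos ((n+1)*s) + 2 * ∑ k ∈ Finset.range n, Real.cos ((k+1:ℕ)*s)|
      ≤ |1 + Real.cos ((n+1)*s)| + |2 * ∑ k ∈ Finset.range n, Real.cos ((k+1:ℕ)*s)| :=
        abs_add_le _ _
    _ ≤ (|(1:ℝ)| + |Real.cos ((n+1)*s)|) + 2*|∑ k ∈ Finset.range n, Real.cos ((k+1:ℕ)*s)| := by
        rw [abs_mul]; gcongr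
        · exact abs_add_le _ _
        · simp
    _ ≤ (1 + 1) + 2*n := by gcongr <;> simp [h1, h2]
    _ ≤ 2*(n+1) := by ring_nf; norm_num

lemma cos_mul_integral_zero (c : ℝ) (hc : 0 < c) (hsin : Real.sin (c * Real.pi) = 0) :
    ∫ s in Set.Icc (-Real.pi) Real.pi, Real.cos (c*s) = 0 := by
  rw [integral_Icc_eq_integral_Ioc,
    ← intervalIntegral.integral_of_le (by linarith [Real.pi_pos] : -Real.pi ≤ Real.pi)]
  rw [intervalIntegral.integral_comp_mul_left Real.cos (ne_of_gt hc), integral_cos]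
  have : c * -Real.pi = -(c * Real.pi) := by ring
  rw [this, Real.sin_neg, hsin]
  simp

lemma Dn_integral (n : ℕ) :
    ∫ s in Set.Icc (-Real.pi) Real.pi, Dn n s = 2 * Real.pi := by
  unfold Dn
  have hmeas : volume (Set.Icc (-Real.pi) Real.pi) < ⊤ := by
    rw [Real.volume_Icc]; exact ENNReal.ofReal_lt_top
  have hint1 : IntegrableOn (fun _ : ℝ => (1:ℝ)) (Set.Icc (-Real.pi) Real.pi) :=
    integrableOn_const hmeas.ne
  have hintc : ∀ c : ℝ, IntegrableOn (fun s => Real.cos (c*s)) (Set.Icc (-Real.pi) Real.pi) :=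
    fun c => (Continuous.continuousOn (by fun_prop)).integrableOn_compact isCompact_Icc
  have hintsum : IntegrableOn
      (fun s => 2 * ∑ k ∈ Finset.range n, Real.cos ((k+1:ℕ)*s)) (Set.Icc (-Real.pi) Real.pi) :=
    (Continuous.continuousOn (by fun_prop)).integrableOn_compact isCompact_Icc
  have hsplit : ∀ s : ℝ, 1 + Real.cos (((n:ℝ)+1)*s) + 2 * ∑ k ∈ Finset.range n, Real.cos ((k+1:ℕ)*s)
      = (fun s => (1:ℝ) + Real.cos (((n:ℝ)+1)*s)) s
        + (fun s => 2 * ∑ k ∈ Finset.range n, Real.cos ((k+1:ℕ)*s)) s := fun s => rfl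
  simp_rw [hsplit]
  have hA : IntegrableOn (fun s => (1:ℝ) + Real.cos (((n:ℝ)+1)*s)) (Set.Icc (-Real.pi) Real.pi) :=
    (Continuous.continuousOn (by fun_prop)).integrableOn_compact isCompact_Icc
  rw [integral_add hA hintsum, integral_add hint1 (hintc ((n:ℝ)+1))]
  have h0 : ∫ s in Set.Icc (-Real.pi) Real.pi, (1:ℝ) = 2 * Real.pi := by
    simp [Real.volume_Icc]
    rw [max_eq_left (by linarith [Real.pi_pos])]
    ring
  have hc1 : ∫ s in Set.Icc (-Real.pi) Real.pi, Real.cos (((n:ℝ)+1)*s) = 0 := by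
    apply cos_mul_integral_zero _ (by positivity)
    have : ((n:ℝ)+1) * Real.pi = ((n+1 : ℕ):ℝ) * Real.pi := by push_cast; ring
    rw [this]; exact Real.sin_nat_mul_pi _
  have hcsum : ∫ s in Set.Icc (-Real.pi) Real.pi,
      2 * ∑ k ∈ Finset.range n, Real.cos ((k+1:ℕ)*s) = 0 := by
    rw [integral_const_mul]
    rw [integral_finset_sum _ (fun k _ => hintc _)]
    have : ∀ k ∈ Finset.range n, ∫ s in Set.Icc (-Real.pi) Real.pi,
        Real.cos (((k+1:ℕ):ℝ)*s) = 0 := by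
      intro k _
      apply cos_mul_integral_zero _ (by positivity)
      exact Real.sin_nat_mul_pi _
    rw [Finset.sum_congr rfl this]
    simp
  rw [h0, hc1, hcsum]
  ring

theorem stmt5 (m : ℤ) (hm : m ≠ 0) (t : ℝ) :
    Tendsto
      (fun ε : ℝ =>
        ∫ s in {s : ℝ | s ∈ Set.Icc (-Real.pi) Real.pi ∧ ε ≤ |s|},
          (Real.cot (s / 2) : ℂ) * Complex.exp (Complex.I * (m : ℂ) * ((t : ℂ) + (s : ℂ))))
      (nhdsWithin 0 (Set.Ioi 0))
      (nhds (2 * (Real.pi : ℂ) * Complex.I * (Int.sign m : ℂ) *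
        Complex.exp (Complex.I * (m : ℂ) * (t : ℂ)))) := by
  obtain ⟨nn, hnn⟩ := Nat.exists_eq_succ_of_ne_zero (Int.natAbs_ne_zero.mpr hm)
  set σ : ℝ := (m.sign : ℝ) with hσdef
  have hσ : σ = 1 ∨ σ = -1 := by
    rcases Int.lt_or_lt_of_ne hm with h | h
    · right; simp [hσdef, Int.sign_eq_neg_one_of_neg h]
    · left; simp [hσdef, Int.sign_eq_one_of_pos h]
  have hσabs : |σ| = 1 := by rcases hσ with h | h <;> simp [h]
  have hmr : (m:ℝ) = σ * ((nn:ℝ)+1) := by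
    have h1 : m.sign * ((nn:ℤ)+1) = m := by
      rw [show ((nn:ℤ)+1) = (m.natAbs : ℤ) by rw [hnn]; push_cast; ring]
      exact Int.sign_mul_natAbs m
    have h2 := congrArg (fun z : ℤ => (z:ℝ)) h1
    push_cast at h2
    rw [hσdef]
    linarith
  -- odd cotangent
  have hcotodd : ∀ x : ℝ, Real.cot (-x) = - Real.cot x := by
    intro x
    simp [Real.cot_eq_cos_div_sin, Real.cos_neg, Real.sin_neg, div_neg]
  -- the set
  set S : ℝ → Set ℝ := fun ε => {s : ℝ | s ∈ Set.Icc (-Real.pi) Real.pi ∧ ε ≤ |s|} with hSdef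
  have hSeq : ∀ ε, S ε = Set.Icc (-Real.pi) Real.pi ∩ {s | ε ≤ |s|} := fun ε => rfl
  have hSmeas : ∀ ε : ℝ, MeasurableSet (S ε) := by
    intro ε
    rw [hSeq]
    exact measurableSet_Icc.inter (isClosed_le continuous_const continuous_abs).measurableSet
  have hScomp : ∀ ε : ℝ, IsCompact (S ε) := by
    intro ε
    rw [hSeq]
    exact isCompact_Icc.inter_right (isClosed_le continuous_const continuous_abs)
  have hSsym : ∀ ε : ℝ, ∀ x : ℝ, x ∈ S ε ↔ -x ∈ S ε := by
    intro ε x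
    simp only [hSdef, Set.mem_setOf_eq, Set.mem_Icc, abs_neg]
    constructor <;> rintro ⟨⟨h1, h2⟩, h3⟩ <;> exact ⟨⟨by linarith, by linarith⟩, h3⟩
  have hsin : ∀ ε : ℝ, 0 < ε → ∀ s ∈ S ε, Real.sin (s/2) ≠ 0 := by
    intro ε hε s hs
    obtain ⟨⟨h1, h2⟩, h3⟩ := hs
    have hpi := Real.pi_pos
    intro hzero
    have h4 : s/2 = 0 := by
      rw [← Real.sin_eq_zero_iff_of_lt_of_lt (by linarith) (by linarith)]
      exact hzero
    have : s = 0 := by linarith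
    rw [this] at h3
    simp at h3
    linarith
  -- key equality of integrals for each ε > 0
  have hC : (0:ℝ) ≤ 2*((nn:ℝ)+1) := by positivity
  set L : ℂ := 2 * (Real.pi : ℂ) * Complex.I * (Int.sign m : ℂ) *
        Complex.exp (Complex.I * (m : ℂ) * (t : ℂ)) with hLdef
  have hmain : ∀ ε : ℝ, 0 < ε →
      ‖(∫ s in S ε, (Real.cot (s / 2) : ℂ) *
          Complex.exp (Complex.I * (m : ℂ) * ((t : ℂ) + (s : ℂ)))) - L‖
        ≤ 2*((nn:ℝ)+1) * (2*ε) := by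
    intro ε hε
    -- continuity facts on S ε
    have hcotC : ContinuousOn (fun s => Real.cot (s/2)) (S ε) := by
      have : ∀ s ∈ S ε, Real.cot (s/2) = Real.cos (s/2) / Real.sin (s/2) := fun s _ =>
        Real.cot_eq_cos_div_sin _
      apply ContinuousOn.congr _ this
      exact ContinuousOn.div (by fun_prop) (by fun_prop) (hsin ε hε)
    have hint1 : IntegrableOn (fun s => Real.cot (s/2) * Real.cos ((m:ℝ)*s)) (S ε) :=
      (hcotC.mul (by fun_prop)).integrableOn_compact (hScomp ε)
    have hint2 : IntegrableOn (fun s => Real.cot (s/2) * Real.sin ((m:ℝ)*s)) (S ε) :=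
      (hcotC.mul (by fun_prop)).integrableOn_compact (hScomp ε)
    -- decomposition of the integrand
    have hdecomp : ∀ s : ℝ,
        (Real.cot (s / 2) : ℂ) * Complex.exp (Complex.I * (m : ℂ) * ((t : ℂ) + (s : ℂ)))
          = Complex.exp (Complex.I*m*t) * ((Real.cot (s/2) * Real.cos ((m:ℝ)*s) : ℝ) : ℂ)
            + (Complex.exp (Complex.I*m*t)*Complex.I) *
              ((Real.cot (s/2) * Real.sin ((m:ℝ)*s) : ℝ) : ℂ) := by
      intro s
      have h1 : Complex.I * (m:ℂ) * ((t:ℂ)+(s:ℂ)) = Complex.I*m*t + (((m:ℝ)*s :ℝ):ℂ)*Complex.I := by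
        push_cast; ring
      rw [h1, Complex.exp_add, Complex.exp_mul_I, ← Complex.ofReal_cos, ← Complex.ofReal_sin]
      push_cast
      ring
    have hi1 : IntegrableOn (fun s : ℝ => Complex.exp (Complex.I*m*t) *
        ((Real.cot (s/2) * Real.cos ((m:ℝ)*s) : ℝ) : ℂ)) (S ε) :=
      (hint1.ofReal (𝕜 := ℂ)).const_mul _
    have hi2 : IntegrableOn (fun s : ℝ => (Complex.exp (Complex.I*m*t)*Complex.I) *
        ((Real.cot (s/2) * Real.sin ((m:ℝ)*s) : ℝ) : ℂ)) (S ε) :=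
      (hint2.ofReal (𝕜 := ℂ)).const_mul _
    have hIeq : (∫ s in S ε, (Real.cot (s / 2) : ℂ) *
          Complex.exp (Complex.I * (m : ℂ) * ((t : ℂ) + (s : ℂ))))
        = Complex.exp (Complex.I*m*t) *
            ((∫ s in S ε, Real.cot (s/2) * Real.cos ((m:ℝ)*s) : ℝ) : ℂ)
          + (Complex.exp (Complex.I*m*t)*Complex.I) *
            ((∫ s in S ε, Real.cot (s/2) * Real.sin ((m:ℝ)*s) : ℝ) : ℂ) := by
      calc (∫ s in S ε, (Real.cot (s / 2) : ℂ) *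
              Complex.exp (Complex.I * (m : ℂ) * ((t : ℂ) + (s : ℂ))))
          = ∫ s in S ε, (Complex.exp (Complex.I*m*t) *
              ((Real.cot (s/2) * Real.cos ((m:ℝ)*s) : ℝ) : ℂ)
            + (Complex.exp (Complex.I*m*t)*Complex.I) *
              ((Real.cot (s/2) * Real.sin ((m:ℝ)*s) : ℝ) : ℂ)) :=
            integral_congr_ae (Filter.EventuallyEq.of_eq (funext hdecomp))
        _ = (∫ s in S ε, Complex.exp (Complex.I*m*t) *
              ((Real.cot (s/2) * Real.cos ((m:ℝ)*s) : ℝ) : ℂ))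
            + ∫ s in S ε, (Complex.exp (Complex.I*m*t)*Complex.I) *
              ((Real.cot (s/2) * Real.sin ((m:ℝ)*s) : ℝ) : ℂ) := integral_add hi1 hi2
        _ = Complex.exp (Complex.I*m*t) *
              (∫ s in S ε, ((Real.cot (s/2) * Real.cos ((m:ℝ)*s) : ℝ) : ℂ))
            + (Complex.exp (Complex.I*m*t)*Complex.I) *
              ∫ s in S ε, ((Real.cot (s/2) * Real.sin ((m:ℝ)*s) : ℝ) : ℂ) := by
            exact congrArg₂ (· + ·) (integral_const_mul _ _) (integral_const_mul _ _)
        _ = Complex.exp (Complex.I*m*t) *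
              ((∫ s in S ε, Real.cot (s/2) * Real.cos ((m:ℝ)*s) : ℝ) : ℂ)
            + (Complex.exp (Complex.I*m*t)*Complex.I) *
              ((∫ s in S ε, Real.cot (s/2) * Real.sin ((m:ℝ)*s) : ℝ) : ℂ) := by
            exact congrArg₂ (· + ·) (congrArg _ integral_ofReal) (congrArg _ integral_ofReal)
    rw [hIeq]
    -- first integral vanishes by oddness
    have hzero : ∫ s in S ε, Real.cot (s/2) * Real.cos ((m:ℝ)*s) = 0 := by
      apply odd_setIntegral_zero _ _ (hSmeas ε) (hSsym ε)
      intro x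
      have h1 : (-x)/2 = -(x/2) := by ring
      have h2 : (m:ℝ) * (-x) = -((m:ℝ)*x) := by ring
      rw [h1, h2, Real.cos_neg, hcotodd]
      ring
    rw [hzero]
    -- second integral equals σ * ∫ Dn
    have hD : ∫ s in S ε, Real.cot (s/2) * Real.sin ((m:ℝ)*s)
        = σ * ∫ s in S ε, Dn nn s := by
      rw [← integral_const_mul]
      apply setIntegral_congr_fun (hSmeas ε)
      intro s hs
      show Real.cot (s/2) * Real.sin ((m:ℝ)*s) = σ * Dn nn s
      have hsinne := hsin ε hε s hs
      have hkey := dirichlet_key s hsinne nn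
      have hsinm : Real.sin ((m:ℝ)*s) = σ * Real.sin (((nn:ℝ)+1)*s) := by
        rw [hmr]
        rcases hσ with h | h <;> rw [h]
        · ring_nf
        · have : -1 * ((nn:ℝ)+1) * s = -(((nn:ℝ)+1)*s) := by ring
          rw [this, Real.sin_neg]; ring
      rw [hsinm]
      unfold Dn
      rw [show Real.cot (s/2) * (σ * Real.sin (((nn:ℝ)+1)*s))
          = σ * (Real.cot (s/2) * Real.sin (((nn:ℝ)+1)*s)) by ring, hkey]
    rw [hD]
    -- bound |∫_{S ε} Dn - 2π| ≤ C * 2ε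
    set T : Set ℝ := Set.Icc (-Real.pi) Real.pi ∩ {s | |s| < ε} with hTdef
    have hTmeas : MeasurableSet T :=
      measurableSet_Icc.inter (isOpen_lt continuous_abs continuous_const).measurableSet
    have hdisj : Disjoint (S ε) T := by
      rw [Set.disjoint_left]
      rintro s ⟨_, h1⟩ ⟨_, h2⟩
      exact absurd h2 (not_lt.mpr h1)
    have hunion : Set.Icc (-Real.pi) Real.pi = S ε ∪ T := by
      ext s
      simp only [hSdef, hTdef, Set.mem_union, Set.mem_inter_iff, Set.mem_setOf_eq]
      constructor
      · intro hs
        rcases le_or_gt ε |s| with h | h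
        · exact Or.inl ⟨hs, h⟩
        · exact Or.inr ⟨hs, h⟩
      · rintro (⟨hs, _⟩ | ⟨hs, _⟩) <;> exact hs
    have hDnint : ∀ U : Set ℝ, U ⊆ Set.Icc (-Real.pi) Real.pi → IntegrableOn (Dn nn) U := by
      intro U hU
      exact (((Dn_continuous nn).continuousOn).integrableOn_compact isCompact_Icc).mono_set hU
    have hsplit : (2:ℝ)*Real.pi = (∫ s in S ε, Dn nn s) + ∫ s in T, Dn nn s := by
      rw [← Dn_integral nn, hunion, setIntegral_union hdisj hTmeas
        (hDnint _ (by rw [hunion]; exact Set.subset_union_left))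
        (hDnint _ (by rw [hunion]; exact Set.subset_union_right))]
    have hTbound : |∫ s in T, Dn nn s| ≤ 2*((nn:ℝ)+1) * (2*ε) := by
      have hvol : (volume T).toReal ≤ 2*ε := by
        apply ENNReal.toReal_le_of_le_ofReal (by positivity)
        calc volume T ≤ volume (Set.Ioo (-ε) ε) := by
              apply measure_mono
              rintro s ⟨_, hs2⟩
              simp only [Set.mem_setOf_eq] at hs2
              exact ⟨by cases abs_lt.mp hs2; linarith, (abs_lt.mp hs2).2⟩
          _ = ENNReal.ofReal (2*ε) := by rw [Real.volume_Ioo]; congr 1; ring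
      calc |∫ s in T, Dn nn s| ≤ 2*((nn:ℝ)+1) * (volume T).toReal := by
            rw [← Real.norm_eq_abs]
            apply norm_setIntegral_le_of_norm_le_const
            · calc volume T ≤ volume (Set.Icc (-Real.pi) Real.pi) :=
                    measure_mono Set.inter_subset_left
                _ < ⊤ := by rw [Real.volume_Icc]; exact ENNReal.ofReal_lt_top
            · intro s _
              rw [Real.norm_eq_abs]
              exact Dn_bound nn s
        _ ≤ 2*((nn:ℝ)+1) * (2*ε) := by gcongr
    -- put everything together
    have hL : L = Complex.exp (Complex.I*m*t) * Complex.I * (σ:ℂ) * ((2:ℂ)*Real.pi) := by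
      rw [hLdef, hσdef]
      push_cast
      ring
    have hJ : ∫ s in S ε, Dn nn s = 2*Real.pi - ∫ s in T, Dn nn s := by linarith [hsplit]
    rw [hJ, hL]
    have hexpnorm : ‖Complex.exp (Complex.I*m*t)‖ = 1 := by
      rw [Complex.norm_exp]
      have : (Complex.I*m*t).re = 0 := by simp
      rw [this, Real.exp_zero]
    have heq : Complex.exp (Complex.I*↑m*↑t) * ((0:ℝ):ℂ) +
          Complex.exp (Complex.I*↑m*↑t) * Complex.I * ↑(σ * (2*Real.pi - ∫ s in T, Dn nn s)) -
          Complex.exp (Complex.I*↑m*↑t) * Complex.I * (σ:ℂ) * ((2:ℂ)*Real.pi)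
        = (Complex.exp (Complex.I*↑m*↑t) * Complex.I * (σ:ℂ)) *
            (-((∫ s in T, Dn nn s : ℝ) : ℂ)) := by
      push_cast
      ring
    rw [heq]
    rw [norm_mul, norm_mul, norm_mul, hexpnorm]
    simp only [Complex.norm_I, norm_neg, Complex.norm_real, one_mul, mul_one]
    rw [Real.norm_eq_abs, Real.norm_eq_abs, hσabs, one_mul]
    exact hTbound
  -- conclude the limit
  rw [tendsto_iff_norm_sub_tendsto_zero]
  apply squeeze_zero' (Filter.Eventually.of_forall (fun ε => norm_nonneg _))
    (g := fun ε => 2*((nn:ℝ)+1) * (2*ε))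
  · filter_upwards [self_mem_nhdsWithin] with ε hε
    exact hmain ε hε
  · have hcont : Continuous (fun ε : ℝ => 2*((nn:ℝ)+1) * (2*ε)) := by continuity
    have h2 := hcont.tendsto 0
    simp only [mul_zero] at h2
    exact h2.mono_left nhdsWithin_le_nhds
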